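/- Let J be a subset of simple reflections and suppose w ∈ W has parabolic decomposition w = u·v with u ∈ W_J, v ∈ W^J, and additionally u is the unique maximal element of W_J below w in Bruhat order. Then the Poincaré polynomial factors: ∑_{x ≤ w} t^{ℓ(x)} = (∑_{y ≤ u} t^{ℓ(y)}) · (∑_{z ∈ W^J, z ≤ v} t^{ℓ(z)}). -/

import Mathlib

variable {B : Type*} {W : Type*} [Group W] {M : CoxeterMatrix B}

/-- The standard parabolic subgroup `W_J` generated by the simple reflections in `J`. -/
def parabolicSubgroup (cs : CoxeterSystem M W) (J : Set B) : Subgroup W :=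
  Subgroup.closure (cs.simple '' J)

/-- Minimal-length representatives of the cosets `W_J\W`. -/
noncomputable def minCosetReps (cs : CoxeterSystem M W) (J : Set B) : Set W :=
  {v | ∀ u ∈ parabolicSubgroup cs J, cs.length v ≤ cs.length (u * v)}

/-- The Bruhat order on a Coxeter group. -/
def bruhatLE (cs : CoxeterSystem M W) : W → W → Prop :=
  Relation.ReflTransGen fun a b =>
    (∃ t, cs.IsReflection t ∧ b = t * a) ∧ cs.length a < cs.length b

/-!
Every `x ≤ u * v` factors as `x = y * z` with `y ∈ W_J`, `z ∈ W^J` and `ℓ x = ℓ y + ℓ z`. By the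
subword property `y ≤ x ≤ w`, so `y ≤ u` by maximality of `u`, and `z ≤ v`; conversely `y ≤ u`
and `z ≤ v` give `y * z ≤ u * v` because `ℓ (u * v) = ℓ u + ℓ v`. Hence `(y, z) ↦ y * z` is a
length-additive bijection onto the Bruhat interval below `w`. The subword property rests on the
strong exchange condition, which comes from Tits' representation of `W` on `W × ZMod 2`.
-/

namespace CoxeterSystem

open List

variable (cs : CoxeterSystem M W)

local prefix:100 "s " => cs.simple
local prefix:100 "π " => cs.wordProd
local prefix:100 "ℓ " => cs.length
local prefix:100 "ris " => cs.rightInvSeq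
local prefix:100 "lis " => cs.leftInvSeq

theorem reverse_alternatingWord_two_mul (i j : B) (p : ℕ) :
    (alternatingWord i j (2 * p)).reverse = alternatingWord j i (2 * p) := by
  induction p with
  | zero => rfl
  | succ p ih =>
    rw [show 2 * (p + 1) = 2 * p + 1 + 1 by ring, alternatingWord_succ', alternatingWord_succ',
      alternatingWord_succ, alternatingWord_succ]
    simp [ih]

theorem prod_map_alternatingWord_two_mul {G : Type*} [Monoid G] (f : B → G) (i j : B) (p : ℕ) :
    ((alternatingWord i j (2 * p)).map f).prod = (f i * f j) ^ p := by
  induction p with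
  | zero => simp [alternatingWord]
  | succ p ih =>
    rw [show 2 * (p + 1) = 2 * p + 1 + 1 by ring, alternatingWord_succ', alternatingWord_succ']
    simp [ih, pow_succ', mul_assoc]

section TitsRepresentation

theorem simple_mul_mul_simple_eq_simple_iff {i : B} {t : W} : s i * t * s i = s i ↔ t = s i := by
  constructor
  · intro h
    simpa [mul_assoc] using congrArg (s i * · * s i) h
  · rintro rfl
    simp

variable [DecidableEq W]

/-- The left inversion sequence of the braid word is periodic with period `p`. -/
theorem even_count_leftInvSeq_alternatingWord {i j : B} {p : ℕ}
    (hp : (s i * s j) ^ p = 1) (t : W) :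
    Even ((lis (alternatingWord j i (2 * p))).count t) := by
  set L := lis (alternatingWord j i (2 * p)) with hLdef
  have hL : L.drop p = L.take p := by
    refine List.ext_getElem (by simp [L]; omega) fun k h₁ h₂ ↦ ?_
    simp only [getElem_drop, getElem_take, hLdef]
    have hk : k < p := by simp [L] at h₂; omega
    rw [getElem_leftInvSeq_alternatingWord _ _ _ _ _ (by omega),
      getElem_leftInvSeq_alternatingWord _ _ _ _ _ (by omega), prod_alternatingWord_eq_mul_pow,
      prod_alternatingWord_eq_mul_pow, show (2 * (p + k) + 1) / 2 = p + k by omega,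
      show (2 * k + 1) / 2 = k by omega, pow_add, hp, one_mul]
    simp
  rw [← take_append_drop p L, hL, count_append]
  exact ⟨_, rfl⟩

/-- Tits' construction (Björner–Brenti, Thm. 1.4.3): `s i` conjugates the first coordinate and
flips the sign exactly at `s i` itself. -/
def titsPerm (i : B) : Equiv.Perm (W × ZMod 2) :=
  Function.Involutive.toPerm (fun x ↦ (s i * x.1 * s i, x.2 + if x.1 = s i then 1 else 0)) <| by
    rintro ⟨t, ε⟩
    simp only [simple_mul_mul_simple_eq_simple_iff, Prod.mk.injEq]
    refine ⟨by simp [mul_assoc], by split_ifs <;> grind⟩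

theorem titsPerm_apply (i : B) (t : W) (ε : ZMod 2) :
    cs.titsPerm i (t, ε) = (s i * t * s i, ε + if t = s i then 1 else 0) := rfl

theorem prod_map_titsPerm_apply (ω : List B) (t : W) (ε : ZMod 2) :
    (ω.map cs.titsPerm).prod (t, ε) = (π ω * t * (π ω)⁻¹, ε + (ris ω).count t) := by
  induction ω generalizing t ε with
  | nil => simp
  | cons i ω ih =>
    have hconj : π ω * t * (π ω)⁻¹ = s i ↔ (π ω)⁻¹ * s i * π ω = t := by
      constructor <;> intro h <;> rw [← h] <;> group
    simp only [map_cons, prod_cons, Equiv.Perm.mul_apply, ih, titsPerm_apply, rightInvSeq,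
      count_cons, wordProd_cons, hconj, mul_inv_rev, inv_simple, beq_iff_eq]
    refine Prod.ext (by group) ?_
    split_ifs <;> push_cast <;> ring

theorem isLiftable_titsPerm : M.IsLiftable cs.titsPerm := by
  intro i j
  rw [← prod_map_alternatingWord_two_mul]
  ext ⟨t, ε⟩ : 1
  have hπ : π (alternatingWord i j (2 * M i j)) = 1 := by
    rw [prod_alternatingWord_eq_mul_pow, if_pos (even_two_mul _), Nat.mul_div_cancel_left _ two_pos,
      one_mul, simple_mul_simple_pow]
  obtain ⟨c, hc⟩ := cs.even_count_leftInvSeq_alternatingWord (cs.simple_mul_simple_pow i j) t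
  rw [prod_map_titsPerm_apply, hπ, ← reverse_alternatingWord_two_mul, rightInvSeq_reverse,
    count_reverse, hc]
  simp [CharTwo.add_self_eq_zero]

def titsRep : W →* Equiv.Perm (W × ZMod 2) := cs.lift ⟨cs.titsPerm, cs.isLiftable_titsPerm⟩

theorem titsRep_wordProd (ω : List B) : cs.titsRep (π ω) = (ω.map cs.titsPerm).prod := by
  simp [titsRep, wordProd, map_list_prod, Function.comp_def, lift_apply_simple]

def rightInvParity (w t : W) : ZMod 2 := (cs.titsRep w (t, 0)).2

theorem rightInvParity_wordProd (ω : List B) (t : W) :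
    cs.rightInvParity (π ω) t = (ris ω).count t := by
  simp [rightInvParity, titsRep_wordProd, prod_map_titsPerm_apply]

theorem titsRep_apply (w t : W) (ε : ZMod 2) :
    cs.titsRep w (t, ε) = (w * t * w⁻¹, ε + cs.rightInvParity w t) := by
  obtain ⟨ω, rfl⟩ := cs.wordProd_surjective w
  simp [rightInvParity_wordProd, titsRep_wordProd, prod_map_titsPerm_apply]

theorem rightInvParity_mul (a b t : W) :
    cs.rightInvParity (a * b) t = cs.rightInvParity b t + cs.rightInvParity a (b * t * b⁻¹) := by
  change (cs.titsRep (a * b) (t, 0)).2 = _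
  rw [map_mul, Equiv.Perm.mul_apply, titsRep_apply, titsRep_apply, zero_add]

theorem rightInvParity_one (t : W) : cs.rightInvParity 1 t = 0 := by
  simp [rightInvParity]

theorem rightInvParity_simple_self (i : B) : cs.rightInvParity (s i) (s i) = 1 := by
  simp [rightInvParity, titsRep, lift_apply_simple, titsPerm_apply]

theorem rightInvParity_self {t : W} (ht : cs.IsReflection t) : cs.rightInvParity t t = 1 := by
  -- Expanding `u * s i * u⁻¹` by the cocycle rule, the contributions of `u` and `u⁻¹` cancel.
  obtain ⟨u, i, rfl⟩ := ht
  have hinv := cs.rightInvParity_mul u u⁻¹ (u * s i * u⁻¹)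
  have hsu := cs.rightInvParity_mul u (s i) (s i)
  have hconj := cs.rightInvParity_mul (u * s i) u⁻¹ (u * s i * u⁻¹)
  have hs : u⁻¹ * (u * s i * u⁻¹) * u⁻¹⁻¹ = s i := by group
  simp only [mul_inv_cancel, rightInvParity_one, rightInvParity_simple_self, inv_simple,
    simple_mul_simple_cancel_right, hs] at hinv hsu hconj
  grind

theorem mem_rightInvSeq_of_rightInvParity_eq_one {ω : List B} {t : W}
    (h : cs.rightInvParity (π ω) t = 1) : t ∈ ris ω := by
  rw [rightInvParity_wordProd] at h
  exact count_pos_iff.mp <| Nat.pos_of_ne_zero fun h0 ↦ by simp [h0] at h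

theorem isRightInversion_of_rightInvParity_eq_one {w t : W} (h : cs.rightInvParity w t = 1) :
    cs.IsRightInversion w t := by
  obtain ⟨ω, hω, rfl⟩ := cs.exists_isReduced w
  exact cs.isRightInversion_of_mem_rightInvSeq hω (cs.mem_rightInvSeq_of_rightInvParity_eq_one h)

theorem rightInvParity_eq_one {w t : W} (h : cs.IsRightInversion w t) :
    cs.rightInvParity w t = 1 := by
  by_contra hne
  have h0 : cs.rightInvParity w t = 0 := by
    generalize cs.rightInvParity w t = a at hne ⊢
    revert a; decide
  have hwt : cs.rightInvParity (w * t) t = 1 := by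
    rw [rightInvParity_mul, rightInvParity_self cs h.1, h.1.mul_self, one_mul, h.1.inv, h0,
      add_zero]
  have := (cs.isRightInversion_of_rightInvParity_eq_one hwt).2
  rw [mul_assoc, h.1.mul_self, mul_one] at this
  exact absurd h.2 (lt_asymm this)

end TitsRepresentation

theorem exists_eraseIdx_of_isLeftInversion {ω : List B} {t : W}
    (h : cs.IsLeftInversion (π ω) t) : ∃ j < ω.length, t * π ω = π (ω.eraseIdx j) := by
  classical
  have hodd := cs.rightInvParity_eq_one (cs.isRightInversion_inv_iff.mpr h)
  rw [← wordProd_reverse] at hodd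
  have hmem : t ∈ lis ω := by
    simpa [rightInvSeq_reverse] using cs.mem_rightInvSeq_of_rightInvParity_eq_one hodd
  obtain ⟨j, hj, rfl⟩ := getElem_of_mem hmem
  refine ⟨j, by simpa using hj, ?_⟩
  rw [← getD_leftInvSeq_mul_wordProd, getD_eq_getElem]

theorem exists_reduced_sublist (ω : List B) : ∃ ρ, ρ <+ ω ∧ cs.IsReduced ρ ∧ π ρ = π ω := by
  induction ω with
  | nil => exact ⟨[], Sublist.slnil, by simp [IsReduced], rfl⟩
  | cons i γ ih =>
    obtain ⟨ρ, hsub, hρ, hprod⟩ := ih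
    rcases cs.length_simple_mul (π ρ) i with hlen | hlen
    · refine ⟨i :: ρ, hsub.cons_cons i, ?_, by rw [wordProd_cons, wordProd_cons, hprod]⟩
      rw [IsReduced, wordProd_cons, hlen, hρ.eq, length_cons]
    · obtain ⟨j, hj, hρj⟩ := cs.exists_eraseIdx_of_isLeftInversion (ω := ρ)
        ⟨cs.isReflection_simple i, by omega⟩
      refine ⟨ρ.eraseIdx j, ((eraseIdx_sublist ρ j).trans hsub).cons i, ?_, ?_⟩
      · rw [IsReduced, ← hρj, length_eraseIdx_of_lt hj]
        have := hρ.eq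
        omega
      · rw [← hρj, hprod, wordProd_cons]

theorem bruhatLE_refl (x : W) : bruhatLE cs x x := Relation.ReflTransGen.refl

theorem bruhatLE_trans {x y z : W} (hxy : bruhatLE cs x y) (hyz : bruhatLE cs y z) :
    bruhatLE cs x z :=
  Relation.ReflTransGen.trans hxy hyz

theorem bruhatLE_mul_of_length_lt {t x : W} (ht : cs.IsReflection t) (h : ℓ x < ℓ (t * x)) :
    bruhatLE cs x (t * x) :=
  Relation.ReflTransGen.single ⟨⟨t, ht, rfl⟩, h⟩

theorem bruhatLE_simple_mul_of_length_lt {x : W} {i : B} (h : ℓ (s i * x) < ℓ x) :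
    bruhatLE cs (s i * x) x := by
  simpa using cs.bruhatLE_mul_of_length_lt (cs.isReflection_simple i) (x := s i * x) (by simpa)

theorem exists_sublist_of_bruhatLE {x : W} {ω : List B} (h : bruhatLE cs x (π ω)) :
    ∃ ρ, ρ <+ ω ∧ π ρ = x := by
  induction h using Relation.ReflTransGen.head_induction_on with
  | refl => exact ⟨ω, Sublist.refl ω, rfl⟩
  | head hstep _ ih =>
    obtain ⟨⟨t, ht, rfl⟩, hlen⟩ := hstep
    obtain ⟨ρ, hsub, hρ⟩ := ih
    have hinv : cs.IsLeftInversion (π ρ) t := ⟨ht, by rwa [hρ, ← mul_assoc, ht.mul_self, one_mul]⟩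
    obtain ⟨j, -, hρj⟩ := cs.exists_eraseIdx_of_isLeftInversion hinv
    refine ⟨ρ.eraseIdx j, (eraseIdx_sublist ρ j).trans hsub, ?_⟩
    rw [← hρj, hρ, ← mul_assoc, ht.mul_self, one_mul]

theorem bruhatLE_simple_mul_or_of_length_lt {t y : W} (ht : cs.IsReflection t)
    (hy : ℓ y < ℓ (t * y)) (i : B) :
    bruhatLE cs (s i * y) (t * y) ∨ bruhatLE cs (s i * y) (s i * (t * y)) := by
  rcases cs.length_simple_mul y i with hsy | hsy
  swap
  · exact .inl <| cs.bruhatLE_trans (cs.bruhatLE_simple_mul_of_length_lt (by omega))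
      (cs.bruhatLE_mul_of_length_lt ht hy)
  have hconj : s i * (t * y) = (s i * t * s i) * (s i * y) := by simp [mul_assoc]
  by_cases hlt : ℓ (s i * y) < ℓ (s i * (t * y))
  · refine .inr ?_
    rw [hconj]
    exact cs.bruhatLE_mul_of_length_lt (by simpa using ht.conj (s i)) (by rwa [← hconj])
  -- Exchange on a word `i :: ω` for `t * y` either deletes `i`, so that `s i * y = t * y`, or
  -- a later letter, which would make `s i * y` shorter than `s i * (t * y)`.
  obtain ⟨ω, hω, hωw⟩ := cs.exists_isReduced (s i * (t * y))
  have hw : π (i :: ω) = t * y := by rw [wordProd_cons, ← hωw, simple_mul_simple_cancel_left]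
  obtain ⟨j, hj, hyj⟩ := cs.exists_eraseIdx_of_isLeftInversion (ω := i :: ω)
    ⟨ht, by rwa [hw, ← mul_assoc, ht.mul_self, one_mul]⟩
  rw [hw, ← mul_assoc, ht.mul_self, one_mul] at hyj
  cases j with
  | zero =>
    refine .inl ?_
    conv_lhs => rw [hyj, eraseIdx_cons_zero, ← hωw, simple_mul_simple_cancel_left]
    exact cs.bruhatLE_refl _
  | succ j =>
    have hjω : j < ω.length := by simpa using hj
    rw [eraseIdx_cons_succ, wordProd_cons] at hyj
    have hle := cs.length_wordProd_le (ω.eraseIdx j)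
    rw [← cs.simple_mul_simple_cancel_left (w := π (ω.eraseIdx j)) i, ← hyj,
      length_eraseIdx_of_lt hjω, ← hω.eq, ← hωw] at hle
    omega

theorem bruhatLE_simple_mul_or {x w : W} (h : bruhatLE cs x w) (i : B) :
    bruhatLE cs (s i * x) w ∨ bruhatLE cs (s i * x) (s i * w) := by
  induction h with
  | refl => exact .inr (cs.bruhatLE_refl _)
  | tail _ hstep ih =>
    obtain ⟨⟨t, ht, rfl⟩, hlen⟩ := hstep
    rcases ih with h | h
    · exact .inl (cs.bruhatLE_trans h (cs.bruhatLE_mul_of_length_lt ht hlen))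
    · rcases cs.bruhatLE_simple_mul_or_of_length_lt ht hlen i with h' | h'
      · exact .inl (cs.bruhatLE_trans h h')
      · exact .inr (cs.bruhatLE_trans h h')

theorem bruhatLE_wordProd_of_sublist {ω ρ : List B} (hω : cs.IsReduced ω) (hρ : ρ <+ ω) :
    bruhatLE cs (π ρ) (π ω) := by
  induction ω generalizing ρ with
  | nil => rw [sublist_nil.mp hρ]; exact cs.bruhatLE_refl _
  | cons i ω ih =>
    have hω' : cs.IsReduced ω := by simpa using hω.drop 1
    have hstep : bruhatLE cs (π ω) (π (i :: ω)) := by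
      rw [wordProd_cons]
      refine cs.bruhatLE_mul_of_length_lt (cs.isReflection_simple i) ?_
      have := hω.eq
      rw [wordProd_cons, length_cons, ← hω'.eq] at this
      omega
    rcases sublist_cons_iff.mp hρ with hρ' | ⟨ρ', rfl, hρ'⟩
    · exact cs.bruhatLE_trans (ih hω' hρ') hstep
    · rw [wordProd_cons]
      rcases cs.bruhatLE_simple_mul_or (ih hω' hρ') i with h | h
      · exact cs.bruhatLE_trans h hstep
      · rwa [wordProd_cons]

theorem bruhatLE_one (w : W) : bruhatLE cs 1 w := by
  obtain ⟨ω, hω, rfl⟩ := cs.exists_isReduced w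
  simpa using cs.bruhatLE_wordProd_of_sublist hω (nil_sublist ω)

theorem exists_mul_of_bruhatLE_mul {x a b : W} (h : bruhatLE cs x (a * b)) :
    ∃ x₁ x₂, bruhatLE cs x₁ a ∧ bruhatLE cs x₂ b ∧ x = x₁ * x₂ := by
  obtain ⟨α, hα, rfl⟩ := cs.exists_isReduced a
  obtain ⟨β, hβ, rfl⟩ := cs.exists_isReduced b
  rw [← wordProd_append] at h
  obtain ⟨ρ, hρ, rfl⟩ := cs.exists_sublist_of_bruhatLE h
  obtain ⟨ρ₁, ρ₂, rfl, h₁, h₂⟩ := sublist_append_iff.mp hρ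
  exact ⟨_, _, cs.bruhatLE_wordProd_of_sublist hα h₁, cs.bruhatLE_wordProd_of_sublist hβ h₂,
    wordProd_append ..⟩

theorem bruhatLE_mul_mul {x y a b : W} (hab : ℓ (a * b) = ℓ a + ℓ b) (hx : bruhatLE cs x a)
    (hy : bruhatLE cs y b) : bruhatLE cs (x * y) (a * b) := by
  obtain ⟨α, hα, rfl⟩ := cs.exists_isReduced a
  obtain ⟨β, hβ, rfl⟩ := cs.exists_isReduced b
  obtain ⟨ρ₁, h₁, rfl⟩ := cs.exists_sublist_of_bruhatLE hx
  obtain ⟨ρ₂, h₂, rfl⟩ := cs.exists_sublist_of_bruhatLE hy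
  have hαβ : cs.IsReduced (α ++ β) := by
    rw [IsReduced, wordProd_append, hab, hα.eq, hβ.eq, length_append]
  simpa only [wordProd_append] using cs.bruhatLE_wordProd_of_sublist hαβ (h₁.append h₂)

theorem wordProd_mem_parabolicSubgroup {J : Set B} {α : List B} (hα : ∀ j ∈ α, j ∈ J) :
    π α ∈ parabolicSubgroup cs J := by
  induction α with
  | nil => exact Subgroup.one_mem _
  | cons i α ih =>
    rw [wordProd_cons]
    exact Subgroup.mul_mem _ (Subgroup.subset_closure ⟨i, hα i mem_cons_self, rfl⟩)
      (ih fun j hj ↦ hα j (mem_cons_of_mem i hj))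

theorem exists_word_of_mem_parabolicSubgroup {J : Set B} {a : W}
    (ha : a ∈ parabolicSubgroup cs J) : ∃ α : List B, (∀ j ∈ α, j ∈ J) ∧ π α = a := by
  induction ha using Subgroup.closure_induction with
  | mem x hx =>
    obtain ⟨i, hi, rfl⟩ := hx
    exact ⟨[i], by simpa using hi, by simp⟩
  | one => exact ⟨[], by simp, rfl⟩
  | mul x y _ _ ihx ihy =>
    obtain ⟨α, hα, rfl⟩ := ihx
    obtain ⟨β, hβ, rfl⟩ := ihy
    exact ⟨α ++ β, by simpa using fun j ↦ Or.rec (hα j) (hβ j), wordProd_append ..⟩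
  | inv x _ ih =>
    obtain ⟨α, hα, rfl⟩ := ih
    exact ⟨α.reverse, by simpa using hα, wordProd_reverse ..⟩

theorem exists_reduced_word_of_mem_parabolicSubgroup {J : Set B} {a : W}
    (ha : a ∈ parabolicSubgroup cs J) :
    ∃ α : List B, (∀ j ∈ α, j ∈ J) ∧ cs.IsReduced α ∧ π α = a := by
  obtain ⟨α, hαJ, rfl⟩ := cs.exists_word_of_mem_parabolicSubgroup ha
  obtain ⟨ρ, hρ, hred, hprod⟩ := cs.exists_reduced_sublist α
  exact ⟨ρ, fun j hj ↦ hαJ j (hρ.subset hj), hred, hprod⟩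

theorem mem_parabolicSubgroup_of_bruhatLE {J : Set B} {x a : W}
    (ha : a ∈ parabolicSubgroup cs J) (hx : bruhatLE cs x a) : x ∈ parabolicSubgroup cs J := by
  obtain ⟨α, hαJ, rfl⟩ := cs.exists_word_of_mem_parabolicSubgroup ha
  obtain ⟨ρ, hρ, rfl⟩ := cs.exists_sublist_of_bruhatLE hx
  exact cs.wordProd_mem_parabolicSubgroup fun j hj ↦ hαJ j (hρ.subset hj)

theorem length_mul_lt_simple_mul_mul {J : Set B} {a b : W} {i : B} (hi : i ∈ J)
    (ha : a ∈ parabolicSubgroup cs J) (hb : b ∈ minCosetReps cs J)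
    (hab : ℓ (a * b) = ℓ a + ℓ b) (hia : ℓ a < ℓ (s i * a)) : ℓ (a * b) < ℓ (s i * (a * b)) := by
  -- Otherwise exchange deletes a letter of `α`, making `s i * a` too short, or of `β`, making
  -- `(a⁻¹ * s i * a) * b` shorter than `b`.
  by_contra! hle
  obtain ⟨α, hα, rfl⟩ := cs.exists_isReduced a
  obtain ⟨β, hβ, rfl⟩ := cs.exists_isReduced b
  rw [← wordProd_append] at hle
  obtain ⟨j, hj, hsj⟩ := cs.exists_eraseIdx_of_isLeftInversion (ω := α ++ β)
    ⟨cs.isReflection_simple i, lt_of_le_of_ne hle (cs.length_simple_mul_ne _ i)⟩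
  rw [wordProd_append] at hsj
  rcases lt_or_ge j α.length with hjα | hjα
  · rw [eraseIdx_append_of_lt_length hjα, wordProd_append, ← mul_assoc, mul_left_inj] at hsj
    have hlen := cs.length_wordProd_le (α.eraseIdx j)
    rw [← hsj, length_eraseIdx_of_lt hjα, ← hα.eq] at hlen
    omega
  · rw [eraseIdx_append_of_length_le hjα, wordProd_append] at hsj
    have hmem : (π α)⁻¹ * s i * π α ∈ parabolicSubgroup cs J :=
      Subgroup.mul_mem _ (Subgroup.mul_mem _ (Subgroup.inv_mem _ ha)
        (Subgroup.subset_closure ⟨i, hi, rfl⟩)) ha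
    have hmin := hb _ hmem
    rw [show (π α)⁻¹ * s i * π α * π β = π (β.eraseIdx (j - α.length)) by
      rw [← mul_left_cancel_iff (a := π α), ← hsj]; group] at hmin
    have hjβ : j - α.length < β.length := by simp only [length_append] at hj; omega
    have hlen := cs.length_wordProd_le (β.eraseIdx (j - α.length))
    rw [length_eraseIdx_of_lt hjβ, ← hβ.eq] at hlen
    have := hβ.eq
    omega

theorem length_mul_of_mem_minCosetReps {J : Set B} {a b : W} (ha : a ∈ parabolicSubgroup cs J)
    (hb : b ∈ minCosetReps cs J) : ℓ (a * b) = ℓ a + ℓ b := by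
  obtain ⟨α, hαJ, hα, rfl⟩ := cs.exists_reduced_word_of_mem_parabolicSubgroup ha
  clear ha
  induction α with
  | nil => simp
  | cons i α ih =>
    have hα' : cs.IsReduced α := by simpa using hα.drop 1
    have hαJ' : ∀ j ∈ α, j ∈ J := fun j hj ↦ hαJ j (mem_cons_of_mem i hj)
    have hia : ℓ (π α) < ℓ (s i * π α) := by
      rw [← wordProd_cons, hα.eq, hα'.eq, length_cons]; omega
    have ih := ih hαJ' hα'
    have hstep := cs.length_mul_lt_simple_mul_mul (hαJ i mem_cons_self)
      (cs.wordProd_mem_parabolicSubgroup hαJ') hb ih hia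
    rw [wordProd_cons, mul_assoc]
    rcases cs.length_simple_mul (π α * b) i with h | h <;>
      rcases cs.length_simple_mul (π α) i with h' | h' <;> omega

theorem exists_mul_mem_minCosetReps (J : Set B) (x : W) :
    ∃ a ∈ parabolicSubgroup cs J, ∃ b ∈ minCosetReps cs J, x = a * b := by
  obtain ⟨p, hp, hmin⟩ := (InvImage.wf (fun p ↦ ℓ (p * x)) wellFounded_lt).has_min
    (parabolicSubgroup cs J) ⟨1, Subgroup.one_mem _⟩
  refine ⟨p⁻¹, Subgroup.inv_mem _ hp, p * x, fun q hq ↦ ?_, by group⟩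
  simpa [InvImage, mul_assoc] using hmin (q * p) (Subgroup.mul_mem _ hq hp)

theorem eq_of_mul_eq_mul_of_mem_minCosetReps {J : Set B} {a a' b b' : W}
    (ha : a ∈ parabolicSubgroup cs J) (ha' : a' ∈ parabolicSubgroup cs J)
    (hb : b ∈ minCosetReps cs J) (hb' : b' ∈ minCosetReps cs J) (h : a * b = a' * b') :
    a = a' ∧ b = b' := by
  obtain ⟨q, rfl⟩ : ∃ q, a = a' * q := ⟨a'⁻¹ * a, by group⟩
  have hq : q ∈ parabolicSubgroup cs J := by
    simpa using Subgroup.mul_mem _ (Subgroup.inv_mem _ ha') ha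
  have hqb : q * b = b' := by rwa [mul_assoc, mul_left_cancel_iff] at h
  have hlen := cs.length_mul_of_mem_minCosetReps hq hb
  have hmin := hb' _ (Subgroup.inv_mem _ hq)
  rw [← hqb, inv_mul_cancel_left] at hmin
  obtain rfl : q = 1 := cs.length_eq_zero_iff.mp (by omega)
  simpa using hqb

theorem exists_factorization_of_bruhatLE_mul {J : Set B} {u v x : W}
    (hu : u ∈ parabolicSubgroup cs J)
    (hmax : ∀ y ∈ parabolicSubgroup cs J, bruhatLE cs y (u * v) → bruhatLE cs y u)
    (hx : bruhatLE cs x (u * v)) :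
    ∃ y z, bruhatLE cs y u ∧ z ∈ minCosetReps cs J ∧ bruhatLE cs z v ∧ y * z = x := by
  obtain ⟨x₁, x₂, h₁, h₂, rfl⟩ := cs.exists_mul_of_bruhatLE_mul hx
  obtain ⟨y, hy, z, hz, rfl⟩ := cs.exists_mul_mem_minCosetReps J x₂
  have hx₁y : x₁ * y ∈ parabolicSubgroup cs J :=
    Subgroup.mul_mem _ (cs.mem_parabolicSubgroup_of_bruhatLE hu h₁) hy
  have hle_x : bruhatLE cs (x₁ * y) (x₁ * (y * z)) := by
    simpa [mul_assoc] using cs.bruhatLE_mul_mul (cs.length_mul_of_mem_minCosetReps hx₁y hz)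
      (cs.bruhatLE_refl _) (cs.bruhatLE_one z)
  have hle_z : bruhatLE cs z (y * z) := by
    simpa using cs.bruhatLE_mul_mul (cs.length_mul_of_mem_minCosetReps hy hz)
      (cs.bruhatLE_one y) (cs.bruhatLE_refl z)
  exact ⟨x₁ * y, z, hmax _ hx₁y (cs.bruhatLE_trans hle_x hx), hz, cs.bruhatLE_trans hle_z h₂,
    mul_assoc ..⟩

end CoxeterSystem

open scoped Classical in
theorem poincare_factorization_general
    [Fintype W] (cs : CoxeterSystem M W) (J : Set B) (w u v : W)
    (hu : u ∈ parabolicSubgroup cs J)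
    (hw : w = u * v) (hl : cs.length w = cs.length u + cs.length v)
    (hmax : ∀ y ∈ parabolicSubgroup cs J, bruhatLE cs y w → bruhatLE cs y u) :
    ∑ x ∈ Finset.univ.filter (fun x => bruhatLE cs x w),
        (Polynomial.X : Polynomial ℤ) ^ cs.length x =
      (∑ y ∈ Finset.univ.filter (fun y => bruhatLE cs y u),
          (Polynomial.X : Polynomial ℤ) ^ cs.length y) *
      (∑ z ∈ Finset.univ.filter
            (fun z => z ∈ minCosetReps cs J ∧ bruhatLE cs z v),
          (Polynomial.X : Polynomial ℤ) ^ cs.length z) := by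
  subst hw
  rw [Finset.sum_mul_sum, ← Finset.sum_product', eq_comm]
  refine Finset.sum_bij (fun p _ ↦ p.1 * p.2) ?_ ?_ ?_ ?_ <;>
    simp only [Finset.mem_product, Finset.mem_filter, Finset.mem_univ, true_and, Prod.forall]
  · exact fun y z hyz ↦ cs.bruhatLE_mul_mul hl hyz.1 hyz.2.2
  · intro y z hyz y' z' hyz' h
    obtain ⟨rfl, rfl⟩ := cs.eq_of_mul_eq_mul_of_mem_minCosetReps
      (cs.mem_parabolicSubgroup_of_bruhatLE hu hyz.1)
      (cs.mem_parabolicSubgroup_of_bruhatLE hu hyz'.1) hyz.2.1 hyz'.2.1 h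
    rfl
  · intro x hx
    obtain ⟨y, z, hy, hz, hzv, rfl⟩ := cs.exists_factorization_of_bruhatLE_mul hu hmax hx
    exact ⟨(y, z), ⟨hy, hz, hzv⟩, rfl⟩
  · intro y z hyz
    rw [← pow_add, cs.length_mul_of_mem_minCosetReps
      (cs.mem_parabolicSubgroup_of_bruhatLE hu hyz.1) hyz.2.1]

open scoped Classical in
/-- factorization of the Poincaré polynomial when `u = m(w,J)` is the
maximal element of `W_J` below `w`. -/
theorem poincare_factorization
    [Fintype W] (cs : CoxeterSystem M W) (J : Set B) (w u v : W)
    (hu : u ∈ parabolicSubgroup cs J) (hv : v ∈ minCosetReps cs J)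
    (hw : w = u * v) (hl : cs.length w = cs.length u + cs.length v)
    (hmax : ∀ y ∈ parabolicSubgroup cs J, bruhatLE cs y w → bruhatLE cs y u) :
    ∑ x ∈ Finset.univ.filter (fun x => bruhatLE cs x w),
        (Polynomial.X : Polynomial ℤ) ^ cs.length x =
      (∑ y ∈ Finset.univ.filter (fun y => bruhatLE cs y u),
          (Polynomial.X : Polynomial ℤ) ^ cs.length y) *
      (∑ z ∈ Finset.univ.filter
            (fun z => z ∈ minCosetReps cs J ∧ bruhatLE cs z v),
          (Polynomial.X : Polynomial ℤ) ^ cs.length z) :=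
  poincare_factorization_general cs J w u v hu hw hl hmax
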